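/- arXiv:2211.01872 — 4 statements merged into one kernel-verified Lean document; each statement's English description precedes it below -/
import Mathlib

section
/- Let G_n be a sequence of graphs such that G_n has 2n vertices, minimum degree 2n − o(n), and contains a perfect matching, and let R_n be a uniformly random perfect matching of G_n. Then there exist a constant C and an N such that for all n ≥ N and every edge e of G_n, Pr(e ∈ R_n) ≤ C/n. -/
/-!
Switching: if a perfect matching `M` contains `uv`, and `x` is a neighbour of `u` whose partner
`y = M x` is a neighbour of `v`, then trading `uv, xy` for `ux, vy` gives another perfect matching,
from which `(M, x)` is recovered since `x` is the new partner of `u`. When all degrees are at least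
`2n - t`, every `M` through `uv` admits at least `2n - 2t - 1` such `x`, so the perfect matchings
through `uv` form at most a `1 / (2n - 2t - 1)` fraction of all of them.
-/

open SimpleGraph Filter

/-- `pm G` is the number of perfect matchings of the graph `G`. -/
noncomputable def pm {V : Type} [Fintype V] (G : SimpleGraph V) : ℕ :=
  Nat.card {P : G.Subgraph // P.IsPerfectMatching}

namespace SimpleGraph

variable {V : Type} {G : SimpleGraph V}

/-- A perfect matching of `G`, recorded as the map sending each vertex to its partner. -/
def MatchingInvolution (G : SimpleGraph V) : Type :=
  {f : V → V // Function.Involutive f ∧ ∀ x, G.Adj x (f x)}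

namespace Subgraph.IsPerfectMatching

variable {M : G.Subgraph} (hM : M.IsPerfectMatching)

noncomputable def partner (v : V) : V :=
  (isPerfectMatching_iff.mp hM v).choose

theorem adj_partner (v : V) : M.Adj v (hM.partner v) :=
  (isPerfectMatching_iff.mp hM v).choose_spec.1

theorem partner_eq_iff {v w : V} : hM.partner v = w ↔ M.Adj v w :=
  ⟨fun h => h ▸ hM.adj_partner v,
    fun h => ((isPerfectMatching_iff.mp hM v).choose_spec.2 w h).symm⟩

theorem partner_involutive : Function.Involutive hM.partner := fun v =>
  (hM.partner_eq_iff).mpr (hM.adj_partner v).symm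

end Subgraph.IsPerfectMatching

namespace MatchingInvolution

instance [Finite V] : Finite G.MatchingInvolution := Subtype.finite

def toSubgraph (f : G.MatchingInvolution) : G.Subgraph where
  verts := Set.univ
  Adj a b := f.1 a = b
  adj_sub := by rintro a b rfl; exact f.2.2 a
  edge_vert _ := Set.mem_univ _
  symm := ⟨by rintro a b rfl; exact f.2.1 a⟩

theorem isPerfectMatching_toSubgraph (f : G.MatchingInvolution) :
    f.toSubgraph.IsPerfectMatching :=
  Subgraph.isPerfectMatching_iff.mpr fun x => ⟨f.1 x, rfl, fun _ hy => Eq.symm hy⟩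

end MatchingInvolution

noncomputable def perfectMatchingEquiv (G : SimpleGraph V) :
    {M : G.Subgraph // M.IsPerfectMatching} ≃ G.MatchingInvolution where
  toFun M := ⟨M.2.partner, M.2.partner_involutive, fun v => M.1.adj_sub (M.2.adj_partner v)⟩
  invFun f := ⟨f.toSubgraph, f.isPerfectMatching_toSubgraph⟩
  left_inv M := by
    refine Subtype.ext (Subgraph.ext (Set.eq_univ_of_forall M.2.2).symm ?_)
    funext a b
    exact propext M.2.partner_eq_iff
  right_inv f :=
    Subtype.ext (funext fun _ => f.isPerfectMatching_toSubgraph.partner_eq_iff.mpr rfl)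

theorem pm_eq_natCard_matchingInvolution [Fintype V] (G : SimpleGraph V) :
    pm G = Nat.card G.MatchingInvolution :=
  Nat.card_congr G.perfectMatchingEquiv

theorem natCard_perfectMatching_mem_edgeSet_eq (G : SimpleGraph V) (u v : V) :
    Nat.card {M : G.Subgraph // M.IsPerfectMatching ∧ s(u, v) ∈ M.edgeSet} =
      Nat.card {f : G.MatchingInvolution // f.1 u = v} := by
  refine Nat.card_congr ((Equiv.subtypeSubtypeEquivSubtypeInter _ _).symm.trans
    (G.perfectMatchingEquiv.subtypeEquiv fun M => ?_))
  exact (Subgraph.mem_edgeSet.trans M.2.partner_eq_iff.symm)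

namespace MatchingInvolution

variable [DecidableEq V] {u v : V}

def switchSet (f : G.MatchingInvolution) (u v : V) : Set V :=
  {x | x ≠ v ∧ G.Adj u x ∧ G.Adj v (f.1 x)}

/-- Trading `uv, x (f x)` for `ux, v (f x)` in the matching `f` is conjugating `f` by the
transposition of `v` and `x`. -/
theorem adj_swap_comp_comp_swap {f : V → V} (hf : Function.Involutive f)
    (hadj : ∀ z, G.Adj z (f z)) {x : V} (hfu : f u = v)
    (hx : x ≠ v ∧ G.Adj u x ∧ G.Adj v (f x)) (z : V) :
    G.Adj z ((Equiv.swap v x ∘ f ∘ Equiv.swap v x) z) := by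
  obtain ⟨hxv, hux, hvy⟩ := hx
  simp only [Function.comp_apply, Equiv.swap_apply_def]
  split_ifs <;> subst_vars <;> grind [G.adj_symm, G.ne_of_adj, Function.Involutive]

def switch (f : G.MatchingInvolution) (hfu : f.1 u = v) {x : V} (hx : x ∈ f.switchSet u v) :
    G.MatchingInvolution :=
  ⟨Equiv.swap v x ∘ f.1 ∘ Equiv.swap v x, fun z => by simp [f.2.1 _],
    adj_swap_comp_comp_swap f.2.1 f.2.2 hfu hx⟩

theorem switch_apply_left (f : G.MatchingInvolution) (hfu : f.1 u = v) {x : V}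
    (hx : x ∈ f.switchSet u v) : (f.switch hfu hx).1 u = x := by
  have huv : u ≠ v := hfu ▸ (f.2.2 u).ne
  simp [switch, Equiv.swap_apply_of_ne_of_ne huv hx.2.1.ne, hfu]

theorem switch_injective (u v : V) :
    Function.Injective fun p : Σ f : {f : G.MatchingInvolution // f.1 u = v},
        f.1.switchSet u v => p.1.1.switch p.1.2 p.2.2 := by
  rintro ⟨⟨f, hfu⟩, x, hx⟩ ⟨⟨g, hgu⟩, y, hy⟩ h
  obtain rfl : x = y := by
    rw [← f.switch_apply_left hfu hx, ← g.switch_apply_left hgu hy]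
    exact congrArg (fun k : G.MatchingInvolution => k.1 u) h
  obtain rfl : f = g := Subtype.ext <| funext fun z => by
    simpa [switch] using congrFun (congrArg Subtype.val h) (Equiv.swap v x z)
  rfl

theorem ncard_neighborSet_add_ncard_neighborSet_le [Finite V] (f : G.MatchingInvolution)
    (u v : V) :
    (G.neighborSet u).ncard + (G.neighborSet v).ncard ≤
      (f.switchSet u v).ncard + Nat.card V + 1 := by
  have hsub : G.neighborSet u ∩ f.1 '' G.neighborSet v ⊆ insert v (f.switchSet u v) := by
    rintro x ⟨hux, y, hvy, rfl⟩
    by_cases hxv : f.1 y = v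
    · exact Or.inl hxv
    · exact Or.inr ⟨hxv, hux, by rwa [f.2.1 y]⟩
  calc (G.neighborSet u).ncard + (G.neighborSet v).ncard
      = (G.neighborSet u).ncard + (f.1 '' G.neighborSet v).ncard := by
        rw [Set.ncard_image_of_injective _ f.2.1.injective]
    _ = (G.neighborSet u ∩ f.1 '' G.neighborSet v).ncard +
          (G.neighborSet u ∪ f.1 '' G.neighborSet v).ncard :=
        (Set.ncard_inter_add_ncard_union _ _).symm
    _ ≤ (f.switchSet u v).ncard + 1 + Nat.card V :=
        add_le_add ((Set.ncard_le_ncard hsub).trans (Set.ncard_insert_le _ _))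
          (Set.ncard_le_card _)
    _ = (f.switchSet u v).ncard + Nat.card V + 1 := by ring

end MatchingInvolution

theorem natCard_matchingInvolution_apply_eq_mul_le [Finite V] [DecidableEq V] (u v : V) :
    Nat.card {f : G.MatchingInvolution // f.1 u = v} *
        ((G.neighborSet u).ncard + (G.neighborSet v).ncard) ≤
      Nat.card G.MatchingInvolution +
        Nat.card {f : G.MatchingInvolution // f.1 u = v} * (Nat.card V + 1) := by
  have := Fintype.ofFinite {f : G.MatchingInvolution // f.1 u = v}
  have hsigma := Nat.card_le_card_of_injective _ (MatchingInvolution.switch_injective (G := G) u v)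
  rw [Nat.card_sigma] at hsigma
  calc Nat.card {f : G.MatchingInvolution // f.1 u = v} *
        ((G.neighborSet u).ncard + (G.neighborSet v).ncard)
      = ∑ f : {f : G.MatchingInvolution // f.1 u = v},
          ((G.neighborSet u).ncard + (G.neighborSet v).ncard) := by
        simp [Nat.card_eq_fintype_card]
    _ ≤ ∑ f : {f : G.MatchingInvolution // f.1 u = v},
          ((f.1.switchSet u v).ncard + (Nat.card V + 1)) :=
        Finset.sum_le_sum fun f _ => by
          grw [f.1.ncard_neighborSet_add_ncard_neighborSet_le u v, add_assoc]
    _ = ∑ f : {f : G.MatchingInvolution // f.1 u = v}, (f.1.switchSet u v).ncard +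
          Nat.card {f : G.MatchingInvolution // f.1 u = v} * (Nat.card V + 1) := by
        simp [Finset.sum_add_distrib, Nat.card_eq_fintype_card]
    _ ≤ _ := by
        simpa only [Nat.card_coe_set_eq] using Nat.add_le_add_right hsigma _

theorem natCard_perfectMatching_mem_edgeSet_div_pm_le [Fintype V] [DecidableEq V] (u v : V)
    {d : ℝ} (hd : 0 < d)
    (hdeg : d + Nat.card V + 1 ≤ (G.neighborSet u).ncard + (G.neighborSet v).ncard) :
    (Nat.card {M : G.Subgraph // M.IsPerfectMatching ∧ s(u, v) ∈ M.edgeSet} : ℝ) / pm G ≤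
      1 / d := by
  rw [natCard_perfectMatching_mem_edgeSet_eq, pm_eq_natCard_matchingInvolution]
  have hcount :=
    (Nat.cast_le (α := ℝ)).mpr (natCard_matchingInvolution_apply_eq_mul_le (G := G) u v)
  push_cast at hcount
  have hmul := mul_le_mul_of_nonneg_left hdeg
    (Nat.cast_nonneg (α := ℝ) (Nat.card {f : G.MatchingInvolution // f.1 u = v}))
  refine div_le_of_le_mul₀ (Nat.cast_nonneg _) (one_div_nonneg.mpr hd.le) ?_
  rw [one_div_mul_eq_div, le_div_iff₀ hd]
  linarith

end SimpleGraph

theorem statement11_general (G : ∀ n : ℕ, SimpleGraph (Fin (2 * n)))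
    (t : ℕ → ℕ) (ht : Tendsto (fun n => (t n : ℝ) / (n : ℝ)) atTop (nhds 0))
    (hdeg : ∀ (n : ℕ) (v : Fin (2 * n)), (2 * n : ℝ) - (t n : ℝ) ≤ (((G n).neighborSet v).ncard : ℝ)) :
    ∃ C : ℝ, ∃ N : ℕ, ∀ n : ℕ, N ≤ n → ∀ e ∈ (G n).edgeSet,
      (Nat.card {P : (G n).Subgraph // P.IsPerfectMatching ∧ e ∈ P.edgeSet} : ℝ)
          / (pm (G n) : ℝ) ≤ C / (n : ℝ) := by
  obtain ⟨N, hN⟩ := eventually_atTop.mp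
    (((tendsto_order.1 ht).2 (1 / 4) (by norm_num)).and (eventually_ge_atTop 2))
  refine ⟨1, N, fun n hn e _ => ?_⟩
  obtain ⟨htn, h2n⟩ := hN n hn
  have hn0 : (0 : ℝ) < n := by positivity
  have h4t : 4 * (t n : ℝ) < n := by
    rw [div_lt_iff₀ hn0] at htn
    linarith
  have h2n : (2 : ℝ) ≤ n := mod_cast h2n
  induction e using Sym2.ind with
  | _ u v =>
    refine natCard_perfectMatching_mem_edgeSet_div_pm_le u v hn0 ?_
    rw [Nat.card_eq_fintype_card, Fintype.card_fin, Nat.cast_mul, Nat.cast_ofNat]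
    linarith [hdeg n u, hdeg n v]

/-- If `G n` is a sequence of graphs on `2n` vertices with minimum degree `2n - o(n)`,
each containing a perfect matching, and `R n` is a uniformly random perfect matching of
`G n`, then there are a constant `C` and an `N` such that for all `n ≥ N` and every edge
`e` of `G n`, `Pr(e ∈ R n) ≤ C / n` (where `Pr(e ∈ R n)` is the fraction of perfect
matchings of `G n` containing `e`). -/
theorem statement11 (G : ∀ n : ℕ, SimpleGraph (Fin (2 * n)))
    (t : ℕ → ℕ) (ht : Tendsto (fun n => (t n : ℝ) / (n : ℝ)) atTop (nhds 0))
    (hdeg : ∀ (n : ℕ) (v : Fin (2 * n)), (2 * n : ℝ) - (t n : ℝ) ≤ (((G n).neighborSet v).ncard : ℝ))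
    (hpm : ∀ n, ∃ M : (G n).Subgraph, M.IsPerfectMatching) :
    ∃ C : ℝ, ∃ N : ℕ, ∀ n : ℕ, N ≤ n → ∀ e ∈ (G n).edgeSet,
      (Nat.card {P : (G n).Subgraph // P.IsPerfectMatching ∧ e ∈ P.edgeSet} : ℝ)
          / (pm (G n) : ℝ) ≤ C / (n : ℝ) :=
  statement11_general G t ht hdeg
end

section
/- Fix an integer r ≥ 3 and a constant C > 0. There exists N such that for all n ≥ N the following holds: if v_1, …, v_r are positive integers with |v_i − n| ≤ C log n for all i and v_1 + ⋯ + v_r even, and G is the complete r-partite graph with parts V_1, …, V_r of sizes v_1, …, v_r, then G has a perfect matching P such that for all i < j, the number of edges of P between V_i and V_j lies in the interval [n/(r−1) − √(n log n), n/(r−1) + √(n log n)]. -/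
/-! The matching is encoded by a symmetric matrix `m` with zero diagonal and row sums `v i`:
cut each part `V i` into blocks of sizes `m i j` and match block `j` of `V i` with block `i`
of `V j`. So it suffices to find such a matrix whose off-diagonal entries are all
`n / (r - 1) + O(r C log n)`. Writing `v i = (r - 1) t + d i` with `t = ⌊n / (r - 1)⌋`, the
deviations satisfy `|d i| ≤ C log n + r` and have even sum, and they are realized by a symmetric
integer matrix with entries `O(∑ |d i|)`: a star centred at one part, corrected on a triangle
to fix the centre's row. Since `log n = o(√n)`, the total error stays below `√(n log n)`. -/

open SimpleGraph Filter Real Asymptotics Finset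

lemma eventually_mul_log_add_le_sqrt (a b : ℝ) : ∀ᶠ x in atTop, a * log x + b ≤ √x := by
  have hsqrt : Tendsto (fun x : ℝ => x ^ (1 / 2 : ℝ)) atTop atTop :=
    tendsto_rpow_atTop (by norm_num)
  have ho : (fun x => a * log x + b) =o[atTop] fun x : ℝ => x ^ (1 / 2 : ℝ) :=
    ((isLittleO_log_rpow_atTop (by norm_num)).const_mul_left a).add
      (isLittleO_const_left.2 (Or.inr (tendsto_norm_atTop_atTop.comp hsqrt)))
  filter_upwards [ho.bound one_pos, eventually_ge_atTop 0] with x hx hx0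
  rw [one_mul, norm_eq_abs, norm_eq_abs, abs_of_nonneg (rpow_nonneg hx0 _), ← sqrt_eq_rpow] at hx
  exact (le_abs_self _).trans hx

lemma abs_sub_mul_floor_div_le {a x : ℝ} (ha : 0 < a) (hx : 0 ≤ x) :
    |x - a * ⌊x / a⌋₊| ≤ a := by
  have h1 := (le_div_iff₀' ha).1 (Nat.floor_le (div_nonneg hx ha.le))
  have h2 := (div_lt_iff₀' ha).1 (Nat.lt_floor_add_one (x / a))
  rw [abs_le]
  constructor <;> nlinarith

section Blocks

variable {ι : Type*} {m : ι → ι → ℕ}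

def swapBlocks (hm : ∀ i j, m i j = m j i) (z : Σ i j, Fin (m i j)) : Σ i j, Fin (m i j) :=
  ⟨z.2.1, z.1, Fin.cast (hm _ _) z.2.2⟩

lemma swapBlocks_involutive (hm : ∀ i j, m i j = m j i) : Function.Involutive (swapBlocks hm) :=
  fun _ => rfl

lemma ncard_setOf_fst_eq_and_snd_fst_eq (i j : ι) :
    {z : Σ i j, Fin (m i j) | z.1 = i ∧ z.2.1 = j}.ncard = m i j := by
  have : {z : Σ i j, Fin (m i j) | z.1 = i ∧ z.2.1 = j} = Set.range fun k => ⟨i, j, k⟩ := by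
    ext ⟨i', j', k⟩
    constructor
    · rintro ⟨rfl, rfl⟩
      exact ⟨k, rfl⟩
    · rintro ⟨k, hk⟩
      cases hk
      exact ⟨rfl, rfl⟩
  rw [this, Set.ncard_range_of_injective (fun k k' h => by simpa using h), Nat.card_eq_fintype_card,
    Fintype.card_fin]

end Blocks

namespace SimpleGraph

variable {W : Type*} {G : SimpleGraph W}

lemma exists_isPerfectMatching_of_involutive {f : W → W} (hf : Function.Involutive f)
    (hG : ∀ x, G.Adj x (f x)) :
    ∃ P : G.Subgraph, P.IsPerfectMatching ∧ ∀ x y, P.Adj x y ↔ y = f x := by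
  refine ⟨{ verts := Set.univ
            Adj := fun x y => y = f x
            adj_sub := by rintro x _ rfl; exact hG x
            edge_vert := fun _ => Set.mem_univ _
            symm := ⟨by rintro x _ rfl; exact (hf x).symm⟩ },
    ⟨fun x _ => ⟨f x, rfl, fun _ h => h⟩, fun _ => Set.mem_univ _⟩, fun _ _ => Iff.rfl⟩

theorem exists_isPerfectMatching_completeMultipartiteGraph {ι : Type*} [Fintype ι]
    {V : ι → Type*} [∀ i, Fintype (V i)] (m : ι → ι → ℕ) (hm : ∀ i j, m i j = m j i)
    (hdiag : ∀ i, m i i = 0) (hV : ∀ i, Fintype.card (V i) = ∑ j, m i j) :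
    ∃ P : (completeMultipartiteGraph V).Subgraph, P.IsPerfectMatching ∧
      ∀ i j, {x : Σ i, V i | x.1 = i ∧ ∃ y, P.Adj x y ∧ y.1 = j}.ncard = m i j := by
  let e : (Σ i, V i) ≃ Σ i j, Fin (m i j) :=
    Equiv.sigmaCongrRight fun i => Fintype.equivOfCardEq (by simp [hV])
  let f := e.symm ∘ swapBlocks hm ∘ e
  have hf : Function.Involutive f := fun x => by simp [f, swapBlocks_involutive hm (e x)]
  have hfst : ∀ x, (f x).1 = (e x).2.1 := fun _ => rfl
  -- `f` moves `x ∈ V i` into the part `j` of its block, and `j ≠ i` because block `i` is empty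
  have hadj : ∀ x, (completeMultipartiteGraph V).Adj x (f x) := by
    intro x h
    rw [hfst] at h
    have hne : ∀ w : Σ j, Fin (m x.1 j), x.1 ≠ w.1 := by
      rintro ⟨j, k⟩ (rfl : x.1 = j)
      exact (hdiag x.1 ▸ k).elim0
    exact hne (e x).2 h
  obtain ⟨P, hP, hPadj⟩ := exists_isPerfectMatching_of_involutive hf hadj
  refine ⟨P, hP, fun i j => ?_⟩
  have : {x : Σ i, V i | x.1 = i ∧ ∃ y, P.Adj x y ∧ y.1 = j} =
      e ⁻¹' {z | z.1 = i ∧ z.2.1 = j} := by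
    ext x
    simp only [hPadj, exists_eq_left, hfst]
    rfl
  rw [this, Set.ncard_preimage_of_injective_subset_range e.injective (by simp),
    ncard_setOf_fst_eq_and_snd_fst_eq]

end SimpleGraph

section Matrices

variable {ι : Type*} [DecidableEq ι]

def pairMatrix (a b i j : ι) : ℤ := if s(i, j) = s(a, b) then 1 else 0

lemma pairMatrix_comm (a b i j : ι) : pairMatrix a b i j = pairMatrix a b j i := by
  simp [pairMatrix, Sym2.eq_swap]

lemma pairMatrix_self {a b : ι} (hab : a ≠ b) (i : ι) : pairMatrix a b i i = 0 := by
  simp only [pairMatrix, Sym2.eq_iff]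
  grind

lemma pairMatrix_mem_Icc (a b i j : ι) : pairMatrix a b i j ∈ Set.Icc 0 1 := by
  unfold pairMatrix; split_ifs <;> norm_num

def starMatrix (c : ι) (d : ι → ℤ) (i j : ι) : ℤ :=
  if i = c then (if j = c then 0 else d j) else if j = c then d i else 0

lemma starMatrix_comm (c : ι) (d : ι → ℤ) (i j : ι) : starMatrix c d i j = starMatrix c d j i := by
  unfold starMatrix; split_ifs <;> simp_all

lemma starMatrix_self (c : ι) (d : ι → ℤ) (i : ι) : starMatrix c d i i = 0 := by
  unfold starMatrix; split_ifs <;> rfl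

variable [Fintype ι]

lemma sum_pairMatrix {a b : ι} (hab : a ≠ b) (i : ι) :
    ∑ j, pairMatrix a b i j = (if i = a then 1 else 0) + (if i = b then 1 else 0) := by
  by_cases ha : i = a <;> by_cases hb : i = b <;> simp_all [pairMatrix]

lemma sum_starMatrix (c : ι) (d : ι → ℤ) (i : ι) :
    ∑ j, starMatrix c d i j = if i = c then ∑ k ∈ univ.erase c, d k else d i := by
  by_cases hi : i = c <;> simp [starMatrix, hi, Finset.sum_ite, Finset.filter_ne']

lemma abs_starMatrix_le (c : ι) (d : ι → ℤ) (i j : ι) : |starMatrix c d i j| ≤ ∑ k, |d k| := by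
  have hle : ∀ k, |d k| ≤ ∑ k, |d k| :=
    fun k => single_le_sum (fun k _ => abs_nonneg (d k)) (mem_univ k)
  unfold starMatrix
  split_ifs <;> simp [hle, sum_nonneg]

theorem exists_symm_sum_eq_of_even (hι : 2 < Fintype.card ι) (d : ι → ℤ)
    (heven : Even (∑ i, d i)) :
    ∃ E : ι → ι → ℤ, (∀ i j, E i j = E j i) ∧ (∀ i, E i i = 0) ∧ (∀ i, ∑ j, E i j = d i) ∧
      ∀ i j, |E i j| ≤ 4 * ∑ k, |d k| := by
  obtain ⟨c, a, b, hca, hcb, hab⟩ := Fintype.two_lt_card_iff.1 hι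
  obtain ⟨s, hs⟩ := heven
  let T i j := pairMatrix c a i j + pairMatrix c b i j - pairMatrix a b i j
  have hT_sum : ∀ i, ∑ j, T i j = if i = c then 2 else 0 := by
    intro i
    simp only [T, sum_add_distrib, sum_sub_distrib, sum_pairMatrix hca, sum_pairMatrix hcb,
      sum_pairMatrix hab]
    split_ifs <;> simp_all
  have hT_abs : ∀ i j, |T i j| ≤ 2 := by
    intro i j
    obtain ⟨hca₀, hca₁⟩ := pairMatrix_mem_Icc c a i j
    obtain ⟨hcb₀, hcb₁⟩ := pairMatrix_mem_Icc c b i j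
    obtain ⟨hab₀, hab₁⟩ := pairMatrix_mem_Icc a b i j
    exact abs_le.2 ⟨by linarith, by linarith⟩
  -- the star overshoots row `c` by `∑ k, d k - 2 * d c = 2 * (s - d c)`; `T` removes it there only
  refine ⟨fun i j => starMatrix c d i j - (s - d c) * T i j, fun i j => ?_, fun i => ?_,
    fun i => ?_, fun i j => ?_⟩
  · simp only [T, starMatrix_comm c d i j, pairMatrix_comm _ _ i j]
  · simp [T, starMatrix_self, pairMatrix_self hca, pairMatrix_self hcb, pairMatrix_self hab]
  · rw [sum_sub_distrib, ← mul_sum, hT_sum, sum_starMatrix]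
    split_ifs with hi
    · rw [hi, sum_erase_eq_sub (mem_univ c)]
      linarith
    · simp
  · have hc : |d c| ≤ ∑ k, |d k| := single_le_sum (fun k _ => abs_nonneg (d k)) (mem_univ c)
    have hy : 2 * |s - d c| ≤ 3 * ∑ k, |d k| :=
      calc 2 * |s - d c| = |∑ k, d k - 2 * d c| := by rw [hs, ← abs_two, ← abs_mul]; ring_nf
        _ ≤ |∑ k, d k| + 2 * |d c| := by simpa [abs_mul] using abs_sub (∑ k, d k) (2 * d c)
        _ ≤ 3 * ∑ k, |d k| := by linarith [abs_sum_le_sum_abs d univ]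
    calc |starMatrix c d i j - (s - d c) * T i j|
        ≤ |starMatrix c d i j| + |s - d c| * |T i j| := by rw [← abs_mul]; exact abs_sub _ _
      _ ≤ ∑ k, |d k| + |s - d c| * 2 := by gcongr; exacts [abs_starMatrix_le c d i j, hT_abs i j]
      _ ≤ 4 * ∑ k, |d k| := by linarith

theorem exists_nat_symm_sum_eq (hι : 2 < Fintype.card ι) (v : ι → ℕ) (heven : Even (∑ i, v i))
    (t : ℕ) (B : ℝ) (hB : ∀ i, |(v i : ℝ) - (Fintype.card ι - 1) * t| ≤ B)
    (ht : 4 * Fintype.card ι * B ≤ t) :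
    ∃ m : ι → ι → ℕ, (∀ i j, m i j = m j i) ∧ (∀ i, m i i = 0) ∧ (∀ i, ∑ j, m i j = v i) ∧
      ∀ i j, i ≠ j → |(m i j : ℝ) - t| ≤ 4 * Fintype.card ι * B := by
  set r := Fintype.card ι
  let d i : ℤ := v i - (r - 1) * t
  have hd_even : Even (∑ i, d i) := by
    have : ∑ i, d i = ((∑ i, v i : ℕ) : ℤ) - r * (r - 1) * t := by
      simp [d, sum_sub_distrib, r]; ring
    rw [this]
    exact (Int.even_coe_nat _ |>.2 heven).sub ((Int.even_mul_pred_self r).mul_right t)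
  have hd_abs : ((∑ k, |d k| : ℤ) : ℝ) ≤ r * B := by
    push_cast [d]
    calc ∑ k, |(v k : ℝ) - (r - 1) * t| ≤ ∑ _k : ι, B := sum_le_sum fun k _ => hB k
      _ = r * B := by simp [r]
  obtain ⟨E, hsymm, hdiag, hrow, hE⟩ := exists_symm_sum_eq_of_even hι d hd_even
  have hE' : ∀ i j, |(E i j : ℝ)| ≤ 4 * r * B := fun i j => by
    have : |(E i j : ℝ)| ≤ 4 * ((∑ k, |d k| : ℤ) : ℝ) := by exact_mod_cast hE i j
    linarith
  have hpos : ∀ i j, 0 ≤ (t : ℤ) + E i j := fun i j => by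
    have : (0 : ℝ) ≤ t + E i j := by linarith [neg_abs_le (E i j : ℝ), hE' i j]
    exact_mod_cast this
  have hcast : ∀ i j, (((t + E i j).toNat : ℕ) : ℤ) = t + E i j :=
    fun i j => Int.toNat_of_nonneg (hpos i j)
  refine ⟨fun i j => if i = j then 0 else (t + E i j).toNat, fun i j => ?_, fun i => ?_,
    fun i => ?_, fun i j hij => ?_⟩
  · simp [eq_comm, hsymm i j]
  · simp
  · have hterm : ∀ j, (((if i = j then 0 else (t + E i j).toNat : ℕ)) : ℤ) =
        t + E i j - if i = j then (t : ℤ) else 0 := by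
      intro j
      split_ifs with h
      · simp [h, hdiag]
      · simp [hcast]
    have : ((∑ j, if i = j then 0 else (t + E i j).toNat : ℕ) : ℤ) = v i := by
      push_cast [hterm]
      rw [sum_sub_distrib, sum_add_distrib, hrow, sum_ite_eq]
      simp [d, r]
      ring
    exact_mod_cast this
  · have : ((if i = j then 0 else (t + E i j).toNat : ℕ) : ℝ) = t + E i j := by
      rw [if_neg hij]
      exact_mod_cast hcast i j
    rw [this, add_sub_cancel_left]
    exact hE' i j

end Matrices

theorem statement13_general (r : ℕ) (hr : 3 ≤ r) (C : ℝ) :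
    ∃ N : ℕ, ∀ n : ℕ, N ≤ n → ∀ v : Fin r → ℕ,
      (∀ i, 0 < v i) → (∀ i, |(v i : ℝ) - (n : ℝ)| ≤ C * Real.log n) →
      Even (∑ i, v i) →
      ∃ P : (completeMultipartiteGraph (fun i => Fin (v i))).Subgraph,
        P.IsPerfectMatching ∧
        ∀ i j : Fin r, i < j →
          (n : ℝ) / ((r : ℝ) - 1) - Real.sqrt ((n : ℝ) * Real.log n) ≤
              (({x : Σ i', Fin (v i') | x.1 = i ∧ ∃ y, P.Adj x y ∧ y.1 = j}).ncard : ℝ) ∧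
            (({x : Σ i', Fin (v i') | x.1 = i ∧ ∃ y, P.Adj x y ∧ y.1 = j}).ncard : ℝ) ≤
              (n : ℝ) / ((r : ℝ) - 1) + Real.sqrt ((n : ℝ) * Real.log n) := by
  have hev : ∀ᶠ x : ℝ in atTop,
      4 * r * (C * log x + r) + 1 ≤ √x ∧ (r : ℝ) ≤ √x ∧ 1 ≤ log x :=
    ((eventually_mul_log_add_le_sqrt (4 * r * C) (4 * r * r + 1)).mono fun x hx => by linarith).and
      (((eventually_mul_log_add_le_sqrt 0 r).mono fun x hx => by linarith).and
        (tendsto_log_atTop.eventually_ge_atTop 1))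
  obtain ⟨N, hN⟩ := eventually_atTop.1 (tendsto_natCast_atTop_atTop.eventually hev)
  refine ⟨N, fun n hn v _ hv hsum => ?_⟩
  obtain ⟨hsmall, hr_sqrt, hlog⟩ := hN n hn
  have hr0 : (0 : ℝ) < r - 1 := by linarith [show (3 : ℝ) ≤ r by exact_mod_cast hr]
  set t := ⌊(n : ℝ) / (r - 1)⌋₊
  have ht_le : (t : ℝ) ≤ n / (r - 1) := Nat.floor_le (by positivity)
  have ht_gt : n / (r - 1) < (t : ℝ) + 1 := Nat.lt_floor_add_one _
  have hB : ∀ i, |(v i : ℝ) - (r - 1) * t| ≤ C * log n + r := fun i =>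
    (abs_sub_le _ (n : ℝ) _).trans (by linarith [hv i, abs_sub_mul_floor_div_le hr0 n.cast_nonneg])
  have hsqrt_le : √n ≤ n / (r - 1) := by
    rw [← div_sqrt]; exact div_le_div_of_nonneg_left n.cast_nonneg hr0 (by linarith)
  obtain ⟨m, hsymm, hdiag, hrow, hm⟩ := exists_nat_symm_sum_eq (ι := Fin r) (by simp; omega) v
    hsum t (C * log n + r) (by simpa using hB) (by simp only [Fintype.card_fin]; linarith)
  simp only [Fintype.card_fin] at hm
  obtain ⟨P, hP, hcount⟩ := exists_isPerfectMatching_completeMultipartiteGraph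
    (V := fun i => Fin (v i)) m hsymm hdiag (by simp [hrow])
  refine ⟨P, hP, fun i j hij => ?_⟩
  have hmij := abs_le.1 (hm i j hij.ne)
  have hsqrt_mono : √n ≤ √(n * log n) := sqrt_le_sqrt (by nlinarith)
  rw [hcount]
  constructor <;> linarith

/-- Fix `r ≥ 3` and `C > 0`.  There is an `N` such that for all `n ≥ N`: if
`v 1, …, v r` are positive integers with `|v i - n| ≤ C log n` and even sum, then the
complete `r`-partite graph with parts of sizes `v 1, …, v r` has a perfect matching `P`
such that for all `i < j` the number of edges of `P` between `V i` and `V j` lies in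
`[n/(r-1) - √(n log n), n/(r-1) + √(n log n)]`. -/
theorem statement13 (r : ℕ) (hr : 3 ≤ r) (C : ℝ) (hC : 0 < C) :
    ∃ N : ℕ, ∀ n : ℕ, N ≤ n → ∀ v : Fin r → ℕ,
      (∀ i, 0 < v i) → (∀ i, |(v i : ℝ) - (n : ℝ)| ≤ C * Real.log n) →
      Even (∑ i, v i) →
      ∃ P : (completeMultipartiteGraph (fun i => Fin (v i))).Subgraph,
        P.IsPerfectMatching ∧
        ∀ i j : Fin r, i < j →
          (n : ℝ) / ((r : ℝ) - 1) - Real.sqrt ((n : ℝ) * Real.log n) ≤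
              (({x : Σ i', Fin (v i') | x.1 = i ∧ ∃ y, P.Adj x y ∧ y.1 = j}).ncard : ℝ) ∧
            (({x : Σ i', Fin (v i') | x.1 = i ∧ ∃ y, P.Adj x y ∧ y.1 = j}).ncard : ℝ) ≤
              (n : ℝ) / ((r : ℝ) - 1) + Real.sqrt ((n : ℝ) * Real.log n) :=
  statement13_general r hr C
end

section
/- Fix an integer r ≥ 3 and a constant C > 0. There exists N such that for all n ≥ N the following holds. Let v_1, …, v_r be positive integers with |v_i − n| ≤ C log n and v_1 + ⋯ + v_r even; let 𝒫 be the set of integer vectors v = (v_{i,j})_{i<j, i,j∈[r]} satisfying v_{i,j} ≥ 0 for all i<j and Σ_{j≠i} v_{i,j} = v_i for all i (where v_{i,j} := v_{j,i} when i > j). Let c = ⌊n/(r−1)⌋ and d = ⌊√(n log n)⌋, and for each integer vector u = (u_{i,j})_{i<j} let 𝒫_u be the set of v ∈ 𝒫 with c + 2u_{i,j}d − d < v_{i,j} ≤ c + 2u_{i,j}d + d for all i<j, and let 𝒞 be the union of 𝒫_u over all u with max_{i<j}|u_{i,j}| ≤ 1. Then for every integer vector u, |𝒫_u| ≤ |𝒞|.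 -/
/-- Integer vectors indexed by the unordered pairs `{i, j} ⊆ [r]`, encoded as symmetric
`r × r` integer matrices with zero diagonal. -/
def PairVec (r : ℕ) : Set (Fin r → Fin r → ℤ) :=
  {w | (∀ i j, w i j = w j i) ∧ ∀ i, w i i = 0}

/-- The set `𝒫` of vectors `(v_{i,j})_{i<j}` satisfying the constraints (PM) for the part
sizes `vparts`: `v_{i,j} ≥ 0` for all `i ≠ j` and `∑_{j ≠ i} v_{i,j} = vparts i` for all
`i` (the diagonal entries of the encoding are `0`, so the sum may be taken over all `j`). -/
def PMvec {r : ℕ} (vparts : Fin r → ℕ) : Set (Fin r → Fin r → ℤ) :=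
  {w ∈ PairVec r | (∀ i j, i ≠ j → 0 ≤ w i j) ∧ ∀ i, ∑ j, w i j = (vparts i : ℤ)}

/-- The set `𝒫_u`: the members `v` of `𝒫` with
`c + 2 u_{i,j} d - d < v_{i,j} ≤ c + 2 u_{i,j} d + d` for all `i < j`. -/
def PMcell {r : ℕ} (vparts : Fin r → ℕ) (c d : ℤ) (u : Fin r → Fin r → ℤ) :
    Set (Fin r → Fin r → ℤ) :=
  {w ∈ PMvec vparts | ∀ i j, i < j →
    c + 2 * u i j * d - d < w i j ∧ w i j ≤ c + 2 * u i j * d + d}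

/-- The set `𝒞`: the union of the `𝒫_u` over all `u` with `|u|_∞ ≤ 1`. -/
def PMcenter {r : ℕ} (vparts : Fin r → ℕ) (c d : ℤ) : Set (Fin r → Fin r → ℤ) :=
  ⋃ u ∈ {u : Fin r → Fin r → ℤ | u ∈ PairVec r ∧ ∀ i j, |u i j| ≤ 1},
    PMcell vparts c d u

/-!
If `𝒫_u` is empty there is nothing to prove; otherwise fix `v₀ ∈ 𝒫_u`. The constraints defining
`𝒫` are affine, so `v ↦ v - v₀ + w` maps `𝒫_u` injectively into `𝒫` whenever `w ∈ 𝒫` and the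
images stay nonnegative. Two members of one cell differ by less than `2d` in every entry, so if
every entry of `w` is within `d` of `c`, the image lies in the box `(c - 3d, c + 3d)`, which is
covered by the cells `𝒫_u'` with `|u'|_∞ ≤ 1`.

Such a `w` exists: the residuals `ρ_i = v_i - (r - 1) c` are `O(log n)` with even sum, and an
even-sum `ρ` on at least three indices is the row-sum vector of a symmetric integer matrix with
zero diagonal and entries `O(r max |ρ_i|)`. Since `log n = o(√(n log n))` and `√(n log n) = o(n)`,
for large `n` these entries are below `d` and `3d ≤ c`.
-/

namespace SymmRowSum

variable {ι : Type*} [DecidableEq ι]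

def starMat (a : ι) (ρ : ι → ℤ) (k l : ι) : ℤ :=
  if k = l then 0 else if k = a then ρ l else if l = a then ρ k else 0

def pairMat (i j k l : ι) : ℤ :=
  if k = i ∧ l = j ∨ k = j ∧ l = i then 1 else 0

lemma starMat_comm (a : ι) (ρ : ι → ℤ) (k l : ι) : starMat a ρ k l = starMat a ρ l k := by
  unfold starMat; split_ifs <;> simp_all

lemma starMat_self (a : ι) (ρ : ι → ℤ) (k : ι) : starMat a ρ k k = 0 := by simp [starMat]

lemma sum_starMat [Fintype ι] (a : ι) (ρ : ι → ℤ) (k : ι) :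
    ∑ l, starMat a ρ k l = if k = a then ∑ l, ρ l - ρ a else ρ k := by
  split_ifs with hk
  · have h : ∀ l, starMat a ρ k l = ρ l - if l = a then ρ a else 0 := by
      intro l; unfold starMat; split_ifs <;> simp_all
    simp [h, Finset.sum_sub_distrib]
  · have h : ∀ l, starMat a ρ k l = if l = a then ρ k else 0 := by
      intro l; unfold starMat; split_ifs <;> simp_all
    simp [h]

lemma abs_starMat_le (a : ι) {ρ : ι → ℤ} {M : ℤ} (hM : ∀ i, |ρ i| ≤ M) (k l : ι) :
    |starMat a ρ k l| ≤ M := by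
  unfold starMat; split_ifs <;> simp [hM, (abs_nonneg _).trans (hM a)]

lemma pairMat_comm (i j k l : ι) : pairMat i j k l = pairMat i j l k := by
  simp only [pairMat, or_comm, and_comm]

lemma pairMat_self {i j : ι} (hij : i ≠ j) (k : ι) : pairMat i j k k = 0 := by
  unfold pairMat; aesop

lemma sum_pairMat [Fintype ι] {i j : ι} (hij : i ≠ j) (k : ι) :
    ∑ l, pairMat i j k l = (if k = i then 1 else 0) + (if k = j then 1 else 0) := by
  have h : ∀ l, pairMat i j k l =
      (if k = i then if l = j then 1 else 0 else 0) +
        (if k = j then if l = i then 1 else 0 else 0) := by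
    intro l; unfold pairMat; split_ifs <;> simp_all
  simp [h, Finset.sum_add_distrib]

def triMat (a b c k l : ι) : ℤ := pairMat b c k l - pairMat a b k l - pairMat a c k l

lemma triMat_comm (a b c k l : ι) : triMat a b c k l = triMat a b c l k := by
  simp only [triMat, pairMat_comm _ _ k l]

lemma triMat_self {a b c : ι} (hab : a ≠ b) (hac : a ≠ c) (hbc : b ≠ c) (k : ι) :
    triMat a b c k k = 0 := by
  simp [triMat, pairMat_self, hab, hac, hbc]

lemma sum_triMat [Fintype ι] {a b c : ι} (hab : a ≠ b) (hac : a ≠ c) (hbc : b ≠ c) (k : ι) :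
    ∑ l, triMat a b c k l = if k = a then -2 else 0 := by
  simp only [triMat, Finset.sum_sub_distrib, sum_pairMat hab, sum_pairMat hac, sum_pairMat hbc]
  split_ifs <;> simp_all

lemma abs_triMat_le (a : ι) {b c : ι} (hbc : b ≠ c) (k l : ι) :
    |triMat a b c k l| ≤ 1 := by
  unfold triMat pairMat; split_ifs <;> aesop

/-- A star centred at `a` realises every row sum except the one at `a`; a multiple of the triangle
`a b c` then corrects row `a` in steps of `2`, which is where the parity of `∑ ρ` enters. -/
theorem exists_symm_sum_eq_of_even [Fintype ι] (hι : 3 ≤ Fintype.card ι) {ρ : ι → ℤ}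
    (hρ : Even (∑ i, ρ i)) {M : ℤ} (hM : ∀ i, |ρ i| ≤ M) :
    ∃ η : ι → ι → ℤ, (∀ k l, η k l = η l k) ∧ (∀ k, η k k = 0) ∧
      (∀ k, ∑ l, η k l = ρ k) ∧ ∀ k l, |η k l| ≤ (Fintype.card ι + 2) * M := by
  obtain ⟨a, b, c, hab, hac, hbc⟩ := Fintype.two_lt_card_iff.1 hι
  obtain ⟨t, ht⟩ := hρ
  have hT : |∑ i, ρ i| ≤ Fintype.card ι * M := by
    calc |∑ i, ρ i| ≤ ∑ i, |ρ i| := Finset.abs_sum_le_sum_abs _ _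
      _ ≤ ∑ _ : ι, M := Finset.sum_le_sum fun i _ => hM i
      _ = Fintype.card ι * M := by simp
  refine ⟨fun k l => starMat a ρ k l + (t - ρ a) * triMat a b c k l, fun k l => ?_, fun k => ?_,
    fun k => ?_, fun k l => ?_⟩
  · dsimp only; rw [starMat_comm, triMat_comm]
  · simp [starMat_self, triMat_self hab hac hbc]
  · rw [Finset.sum_add_distrib, ← Finset.mul_sum, sum_starMat, sum_triMat hab hac hbc]
    split_ifs with hk
    · subst hk; linarith
    · simp
  · have hM0 : 0 ≤ M := (abs_nonneg _).trans (hM a)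
    have hs : |t - ρ a| ≤ (Fintype.card ι + 1) * M := by
      have := abs_le.1 (hM a)
      have := abs_le.1 (ht ▸ hT)
      have := mul_nonneg (Nat.cast_nonneg (α := ℤ) (Fintype.card ι)) hM0
      exact abs_le.2 ⟨by linarith, by linarith⟩
    calc |starMat a ρ k l + (t - ρ a) * triMat a b c k l|
        ≤ |starMat a ρ k l| + |t - ρ a| * |triMat a b c k l| :=
          (abs_add_le _ _).trans_eq (by rw [abs_mul])
      _ ≤ M + (Fintype.card ι + 1) * M * 1 := by
          gcongr
          exacts [abs_starMat_le a hM k l, abs_triMat_le a hbc k l]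
      _ = (Fintype.card ι + 2) * M := by ring

end SymmRowSum

section PMvec

variable {r : ℕ} {vparts : Fin r → ℕ}

lemma PMvec_finite (vparts : Fin r → ℕ) : (PMvec vparts).Finite := by
  refine (Set.finite_Icc (0 : Fin r → Fin r → ℤ) fun i _ => vparts i).subset ?_
  rintro w ⟨⟨-, hdiag⟩, hnn, hsum⟩
  have hnn' : ∀ i j, 0 ≤ w i j := fun i j => by
    rcases eq_or_ne i j with rfl | hij
    · exact (hdiag i).ge
    · exact hnn i j hij
  refine ⟨fun i j => hnn' i j, fun i j => ?_⟩
  show w i j ≤ vparts i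
  rw [← hsum i]
  exact Finset.single_le_sum (fun l _ => hnn' i l) (Finset.mem_univ j)

lemma PMcenter_subset_PMvec (c d : ℤ) : PMcenter vparts c d ⊆ PMvec vparts :=
  Set.iUnion₂_subset fun _ _ _ hw => hw.1

lemma sub_add_mem_PMvec {v v' w : Fin r → Fin r → ℤ} (hv : v ∈ PMvec vparts)
    (hv' : v' ∈ PMvec vparts) (hw : w ∈ PMvec vparts)
    (hnn : ∀ i j, i < j → 0 ≤ v i j - v' i j + w i j) : v - v' + w ∈ PMvec vparts := by
  obtain ⟨⟨hvs, hvd⟩, -, hvr⟩ := hv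
  obtain ⟨⟨hv's, hv'd⟩, -, hv'r⟩ := hv'
  obtain ⟨⟨hws, hwd⟩, -, hwr⟩ := hw
  refine ⟨⟨fun i j => ?_, fun i => ?_⟩, fun i j hij => ?_, fun i => ?_⟩
  · simp only [Pi.add_apply, Pi.sub_apply, hvs i j, hv's i j, hws i j]
  · simp only [Pi.add_apply, Pi.sub_apply, hvd, hv'd, hwd, sub_zero, add_zero]
  · rcases hij.lt_or_gt with h | h
    · exact hnn i j h
    · simpa only [Pi.add_apply, Pi.sub_apply, hvs i j, hv's i j, hws i j] using hnn j i h
  · simp only [Pi.add_apply, Pi.sub_apply, Finset.sum_add_distrib, Finset.sum_sub_distrib, hvr,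
      hv'r, hwr, sub_self, zero_add]

lemma mem_PMcenter_of_forall_lt {c d : ℤ} {x : Fin r → Fin r → ℤ} (hx : x ∈ PMvec vparts)
    (hb : ∀ i j, i < j → c - 3 * d < x i j ∧ x i j ≤ c + 3 * d) : x ∈ PMcenter vparts c d := by
  set u : Fin r → Fin r → ℤ := fun i j =>
    if i = j then 0 else if x i j ≤ c - d then -1 else if x i j ≤ c + d then 0 else 1
  have hu : u ∈ PairVec r :=
    ⟨fun i j => by simp only [u, eq_comm, hx.1.1 i j], fun i => by simp [u]⟩
  refine Set.mem_iUnion₂.2 ⟨u, ⟨hu, fun i j => ?_⟩, hx, fun i j hij => ?_⟩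
  · simp only [u]; split_ifs <;> simp
  · have := hb i j hij
    simp only [u, hij.ne, if_false]
    split_ifs <;> constructor <;> linarith

lemma PMcell_abs_sub_lt {c d : ℤ} {u v v' : Fin r → Fin r → ℤ} (hv : v ∈ PMcell vparts c d u)
    (hv' : v' ∈ PMcell vparts c d u) {i j : Fin r} (hij : i < j) : |v i j - v' i j| < 2 * d := by
  have h := hv.2 i j hij
  have h' := hv'.2 i j hij
  rw [abs_lt]; constructor <;> linarith

theorem ncard_PMcell_le_ncard_PMcenter {c d : ℤ} (hcd : 3 * d ≤ c) {w : Fin r → Fin r → ℤ}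
    (hw : w ∈ PMvec vparts) (hwc : ∀ i j, i < j → |w i j - c| < d) (u : Fin r → Fin r → ℤ) :
    (PMcell vparts c d u).ncard ≤ (PMcenter vparts c d).ncard := by
  rcases (PMcell vparts c d u).eq_empty_or_nonempty with h | ⟨v₀, hv₀⟩
  · simp [h]
  have hbox : ∀ v ∈ PMcell vparts c d u, ∀ i j, i < j →
      c - 3 * d < v i j - v₀ i j + w i j ∧ v i j - v₀ i j + w i j < c + 3 * d := by
    intro v hv i j hij
    have h1 := abs_lt.1 (PMcell_abs_sub_lt hv hv₀ hij)
    have h2 := abs_lt.1 (hwc i j hij)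
    constructor <;> linarith
  refine Set.ncard_le_ncard_of_injOn (· - v₀ + w) (fun v hv => ?_) (fun v _ v' _ h => ?_)
    ((PMvec_finite vparts).subset (PMcenter_subset_PMvec c d))
  · refine mem_PMcenter_of_forall_lt (sub_add_mem_PMvec hv.1 hv₀.1 hw fun i j hij => ?_)
      fun i j hij => ?_
    · linarith [hbox v hv i j hij]
    · exact ⟨(hbox v hv i j hij).1, (hbox v hv i j hij).2.le⟩
  · simpa using h

lemma exists_mem_PMvec_abs_sub_le (hr : 3 ≤ r) (heven : Even (∑ i, vparts i)) {c M : ℤ}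
    (hM : ∀ i, |(vparts i : ℤ) - (r - 1) * c| ≤ M)
    (hMc : (r + 2) * M ≤ c) :
    ∃ w ∈ PMvec vparts, ∀ i j, i ≠ j → |w i j - c| ≤ (r + 2) * M := by
  have hρ : Even (∑ i, ((vparts i : ℤ) - (r - 1) * c)) := by
    rw [Finset.sum_sub_distrib, Finset.sum_const, Finset.card_univ, Fintype.card_fin,
      nsmul_eq_mul, ← mul_assoc, ← Nat.cast_sum]
    exact ((Int.even_coe_nat _).2 heven).sub ((Int.even_mul_pred_self r).mul_right c)
  obtain ⟨η, hsymm, hdiag, hsum, hbound⟩ :=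
    SymmRowSum.exists_symm_sum_eq_of_even (by simpa using hr) hρ hM
  rw [Fintype.card_fin] at hbound
  have hite : ∀ i j, (if i = j then 0 else c + η i j) = c + η i j - if i = j then c else 0 := by
    intro i j; split_ifs with h <;> simp [h, hdiag]
  refine ⟨fun i j => if i = j then 0 else c + η i j,
    ⟨⟨fun i j => ?_, fun i => ?_⟩, fun i j hij => ?_, fun i => ?_⟩, fun i j hij => ?_⟩
  · simp only [eq_comm, hsymm i j]
  · simp
  · have := abs_le.1 (hbound i j)
    simp only [hij, if_false]; linarith
  · simp only [hite, Finset.sum_sub_distrib, Finset.sum_add_distrib, hsum, Finset.sum_ite_eq,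
      Finset.mem_univ, if_true, Finset.sum_const, Finset.card_univ, Fintype.card_fin, nsmul_eq_mul]
    ring
  · simpa [hij] using hbound i j

end PMvec

open Filter Topology Real

lemma eventually_mul_add_le_of_isLittleO {α : Type*} {l : Filter α} {f g : α → ℝ}
    (hfg : f =o[l] g) (hg : Tendsto g l atTop) (A B : ℝ) : ∀ᶠ x in l, A * f x + B ≤ g x := by
  filter_upwards [hfg.bound (show (0 : ℝ) < 1 / (2 * (|A| + 1)) by positivity),
    hg.eventually_ge_atTop 0, hg.eventually_ge_atTop (2 * B)] with x hfx hg0 hgB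
  rw [Real.norm_eq_abs, Real.norm_eq_abs, abs_of_nonneg hg0] at hfx
  have hAf : A * f x ≤ g x / 2 :=
    calc A * f x ≤ |A| * |f x| := by rw [← abs_mul]; exact le_abs_self _
      _ ≤ (|A| + 1) * (1 / (2 * (|A| + 1)) * g x) := by gcongr; linarith
      _ = g x / 2 := by field_simp
  linarith

lemma tendsto_sqrt_mul_log_atTop : Tendsto (fun x => √(x * log x)) atTop atTop :=
  tendsto_sqrt_atTop.comp (tendsto_id.atTop_mul_atTop₀ tendsto_log_atTop)

lemma tendsto_sqrt_log_div_self_atTop : Tendsto (fun x => √(log x / x)) atTop (𝓝 0) := by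
  simpa [Function.comp_def] using
    (continuous_sqrt.tendsto 0).comp isLittleO_log_id_atTop.tendsto_div_nhds_zero

lemma isLittleO_log_sqrt_mul_log : log =o[atTop] fun x => √(x * log x) := by
  refine Asymptotics.isLittleO_iff_exists_eq_mul.2 ⟨_, tendsto_sqrt_log_div_self_atTop, ?_⟩
  filter_upwards [eventually_ge_atTop 1] with x hx
  have hlog := log_nonneg hx
  rw [Pi.mul_apply, ← sqrt_mul (div_nonneg hlog (by linarith)),
    show log x / x * (x * log x) = log x ^ 2 by field_simp, sqrt_sq hlog]

lemma isLittleO_sqrt_mul_log_id : (fun x => √(x * log x)) =o[atTop] id := by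
  refine Asymptotics.isLittleO_iff_exists_eq_mul.2 ⟨_, tendsto_sqrt_log_div_self_atTop, ?_⟩
  filter_upwards [eventually_ge_atTop 1] with x hx
  have hx0 : 0 ≤ x := by linarith
  calc √(x * log x) = √(log x / x * x ^ 2) := by congr 1; field_simp
    _ = √(log x / x) * x := by rw [sqrt_mul (div_nonneg (log_nonneg hx) hx0), sqrt_sq hx0]

lemma abs_sub_mul_div_le {q : ℕ} (hq : 0 < q) (a : ℤ) (n : ℕ) :
    |a - q * (n / q : ℕ)| ≤ |a - n| + (q - 1) := by
  have hmod := Nat.mod_lt n hq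
  have hdiv : (n : ℤ) = q * (n / q : ℕ) + (n % q : ℕ) := by
    exact_mod_cast (Nat.div_add_mod n q).symm
  calc |a - q * (n / q : ℕ)| = |(a - n) + (n % q : ℕ)| := by rw [hdiv]; ring_nf
    _ ≤ |a - n| + (n % q : ℕ) :=
      (abs_add_le _ _).trans_eq (by rw [abs_of_nonneg (Int.natCast_nonneg _)])
    _ ≤ |a - n| + (q - 1) := by gcongr; omega

lemma three_mul_floor_le_natCast_div {q n : ℕ} (hq : 0 < q) {x : ℝ} (h : 3 * q * x ≤ n) :
    3 * ⌊x⌋ ≤ ((n / q : ℕ) : ℤ) := by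
  rw [Int.natCast_div, Int.le_ediv_iff_mul_le (by exact_mod_cast hq)]
  have hq' : (0 : ℝ) ≤ q := by positivity
  have : ((3 * ⌊x⌋ * q : ℤ) : ℝ) ≤ n := by
    push_cast
    nlinarith [Int.floor_le x]
  exact_mod_cast this

theorem statement14_general (r : ℕ) (hr : 3 ≤ r) (C : ℝ) :
    ∃ N : ℕ, ∀ n : ℕ, N ≤ n → ∀ vparts : Fin r → ℕ,
      (∀ i, 0 < vparts i) → (∀ i, |(vparts i : ℝ) - (n : ℝ)| ≤ C * Real.log n) →
      Even (∑ i, vparts i) →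
      ∀ u : Fin r → Fin r → ℤ, u ∈ PairVec r →
        (PMcell vparts ((n / (r - 1) : ℕ) : ℤ) ⌊Real.sqrt ((n : ℝ) * Real.log n)⌋ u).ncard ≤
          (PMcenter vparts ((n / (r - 1) : ℕ) : ℤ) ⌊Real.sqrt ((n : ℝ) * Real.log n)⌋).ncard := by
  obtain ⟨N, hN⟩ := eventually_atTop.1 <| tendsto_natCast_atTop_atTop.eventually <|
    (eventually_mul_add_le_of_isLittleO isLittleO_log_sqrt_mul_log tendsto_sqrt_mul_log_atTop
      ((r + 2) * C) ((r + 2) * r)).and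
    (eventually_mul_add_le_of_isLittleO isLittleO_sqrt_mul_log_id tendsto_id
      (3 * (r - 1 : ℕ)) 0)
  refine ⟨N, fun n hn vparts _ hclose heven u _ => ?_⟩
  obtain ⟨hlog, hsqrt⟩ := hN n hn
  set M := ⌊C * log n⌋ + (r - 2)
  have hM : ∀ i, |(vparts i : ℤ) - (r - 1) * ((n / (r - 1) : ℕ) : ℤ)| ≤ M := fun i => by
    have hfl : |(vparts i : ℤ) - n| ≤ ⌊C * log n⌋ := Int.le_floor.2 (by push_cast; exact hclose i)
    have := abs_sub_mul_div_le (show 0 < r - 1 by omega) (vparts i) n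
    rw [Nat.cast_sub (by omega), Nat.cast_one] at this
    linarith
  have hMd : (r + 2) * M < ⌊√((n : ℝ) * log n)⌋ := by
    rw [← Int.add_one_le_iff, Int.le_floor]
    have hrR : (3 : ℝ) ≤ r := by exact_mod_cast hr
    push_cast [M]
    nlinarith [Int.floor_le (C * log n)]
  have hcd := three_mul_floor_le_natCast_div (show 0 < r - 1 by omega)
    (by simpa only [id, add_zero] using hsqrt)
  have hd0 : 0 ≤ ⌊√((n : ℝ) * log n)⌋ := Int.floor_nonneg.2 (sqrt_nonneg _)
  obtain ⟨w, hw, hwc⟩ := exists_mem_PMvec_abs_sub_le hr heven hM (by linarith)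
  exact ncard_PMcell_le_ncard_PMcenter hcd hw (fun i j hij => (hwc i j hij.ne).trans_lt hMd) u

/-- Fix `r ≥ 3` and `C > 0`.  There is an `N` such that for all `n ≥ N`: if
`v 1, …, v r` are positive integers with `|v i - n| ≤ C log n` and even sum, then with
`c = ⌊n/(r-1)⌋` and `d = ⌊√(n log n)⌋` we have `|𝒫_u| ≤ |𝒞|` for every integer vector
`u`. -/
theorem statement14 (r : ℕ) (hr : 3 ≤ r) (C : ℝ) (hC : 0 < C) :
    ∃ N : ℕ, ∀ n : ℕ, N ≤ n → ∀ vparts : Fin r → ℕ,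
      (∀ i, 0 < vparts i) → (∀ i, |(vparts i : ℝ) - (n : ℝ)| ≤ C * Real.log n) →
      Even (∑ i, vparts i) →
      ∀ u : Fin r → Fin r → ℤ, u ∈ PairVec r →
        (PMcell vparts ((n / (r - 1) : ℕ) : ℤ) ⌊Real.sqrt ((n : ℝ) * Real.log n)⌋ u).ncard ≤
          (PMcenter vparts ((n / (r - 1) : ℕ) : ℤ) ⌊Real.sqrt ((n : ℝ) * Real.log n)⌋).ncard :=
  statement14_general r hr C
end

section
/- Let x_1 ≥ … ≥ x_t ≥ 0 and y_1 ≥ … ≥ y_t ≥ 0 be non-negative integers with Σ_{i=1}^t x_i = Σ_{i=1}^t y_i = S. Let c = ⌊S/t⌋, let k ≥ 0 satisfy |x_i − c| ≤ k for all i ∈ [t] and c > k, and let δ ≥ 1 be an integer such that y_1 ≥ c + 2δ. Then ∏_{i=1}^t x_i!/y_i! ≤ exp(−δ(δ−1)/(c+δ) + 2k²t/(c−k)). -/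
/-!
Normalise each factorial by `c`: the function `g m = m! / c ^ m` satisfies
`g (m + 1) = g m * (m + 1) / c`, so it is minimal at `m = c`. Since `∑ x i = ∑ y i`, the
powers of `c` cancel and `∏ x i! / y i! = ∏ g (x i) / ∏ g (y i)`. Comparing `g m` with `g c`
one factor at a time, `|m - c| ≤ k` gives
`g m ≤ g c · (c / (c - k)) ^ k ≤ g c · exp (k² / (c - k))`, every `g (y i)` is at least `g c`,
and `y 0 ≥ c + 2δ` gives `g (y 0) ≥ g c · ((c + δ) / c) ^ δ ≥ g c · exp (δ² / (c + δ))`.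
-/

open Finset Real
open scoped Nat

lemma prod_div_eq_div_of_sum_eq {ι : Type*} (s : Finset ι) (f g : ι → ℝ) {x y : ι → ℕ}
    (hxy : ∑ i ∈ s, x i = ∑ i ∈ s, y i) {c : ℝ} (hc : c ≠ 0) :
    ∏ i ∈ s, f i / g i = (∏ i ∈ s, f i / c ^ x i) / ∏ i ∈ s, g i / c ^ y i := by
  simp only [prod_div_distrib, prod_pow_eq_pow_sum, hxy]
  exact (div_div_div_cancel_right₀ (pow_ne_zero _ hc) _ _).symm

lemma pow_card_mul_le_prod {ι : Type*} [Fintype ι] [DecidableEq ι] {f : ι → ℝ} {a b : ℝ}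
    (i₀ : ι) (ha : 0 ≤ a) (hf : ∀ i, a ≤ f i) (hf₀ : a * b ≤ f i₀) :
    a ^ Fintype.card ι * b ≤ ∏ i, f i := by
  have hcard : Fintype.card ι = (univ.erase i₀).card + 1 := by
    rw [card_erase_of_mem (mem_univ _), card_univ,
      Nat.sub_add_cancel (Fintype.card_pos_iff.2 ⟨i₀⟩)]
  have hrest : a ^ (univ.erase i₀).card ≤ ∏ i ∈ univ.erase i₀, f i := by
    simpa using prod_le_prod (s := univ.erase i₀) (fun _ _ => ha) (fun i _ => hf i)
  calc a ^ Fintype.card ι * b = a * b * a ^ (univ.erase i₀).card := by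
        rw [hcard, pow_succ]; ring
    _ ≤ f i₀ * ∏ i ∈ univ.erase i₀, f i :=
        mul_le_mul hf₀ hrest (pow_nonneg ha _) (ha.trans (hf i₀))
    _ = ∏ i, f i := mul_prod_erase univ f (mem_univ i₀)

lemma pow_le_exp_mul_of_le_one_add {r a : ℝ} {d n : ℕ} (hr : 0 ≤ r) (hra : r ≤ 1 + a)
    (ha : 0 ≤ a) (hdn : d ≤ n) : r ^ d ≤ exp (n * a) :=
  calc r ^ d ≤ exp a ^ d := pow_le_pow_left₀ hr (hra.trans (by linarith [add_one_le_exp a])) d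
    _ = exp (d * a) := (exp_nat_mul a d).symm
    _ ≤ exp (n * a) := exp_le_exp.2 (mul_le_mul_of_nonneg_right (by exact_mod_cast hdn) ha)

lemma exp_nat_mul_div_add_le_pow {a b : ℝ} (ha : 0 < a) (hb : 0 ≤ b) (n : ℕ) :
    exp (n * (b / (a + b))) ≤ ((a + b) / a) ^ n := by
  have hlog : b / (a + b) ≤ log ((a + b) / a) := by
    have h := one_sub_inv_le_log_of_pos (x := (a + b) / a) (by positivity)
    rwa [inv_div, one_sub_div (by positivity), add_sub_cancel_left] at h
  rw [← exp_log (by positivity : 0 < (a + b) / a), ← exp_nat_mul]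
  exact exp_le_exp.2 (mul_le_mul_of_nonneg_left hlog (Nat.cast_nonneg n))

section FactorialDivPow

variable {c : ℕ}

lemma factorial_div_pow_mul_le (hc : 0 < c) (m d : ℕ) :
    (m ! : ℝ) / c ^ m * ((m + 1) / c) ^ d ≤ (m + d)! / c ^ (m + d) := by
  have h : (m ! * (m + 1) ^ d : ℝ) ≤ (m + d)! := by
    exact_mod_cast Nat.factorial_mul_pow_le_factorial
  rw [div_pow, div_mul_div_comm, ← pow_add]
  gcongr

lemma factorial_div_pow_le_mul (hc : 0 < c) (m d : ℕ) :
    ((m + d)! : ℝ) / c ^ (m + d) ≤ m ! / c ^ m * ((m + d) / c) ^ d := by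
  have h : ((m + d)! : ℝ) ≤ m ! * (m + d) ^ d := by
    rw [← Nat.factorial_mul_ascFactorial]
    exact_mod_cast Nat.mul_le_mul_left _ (Nat.ascFactorial_le_pow_add m d)
  rw [div_pow, div_mul_div_comm, ← pow_add]
  gcongr

lemma factorial_div_pow_le_of_le (hc : 0 < c) {m n : ℕ} (hcm : c ≤ m + 1) (hmn : m ≤ n) :
    (m ! : ℝ) / c ^ m ≤ n ! / c ^ n := by
  obtain ⟨d, rfl⟩ := Nat.exists_eq_add_of_le hmn
  refine le_trans ?_ (factorial_div_pow_mul_le hc m d)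
  refine le_mul_of_one_le_right (by positivity) (one_le_pow₀ ?_)
  rw [one_le_div (by positivity)]
  exact_mod_cast hcm

lemma factorial_div_pow_self_le (hc : 0 < c) (m : ℕ) : (c ! : ℝ) / c ^ c ≤ m ! / c ^ m := by
  rcases le_total c m with hcm | hmc
  · exact factorial_div_pow_le_of_le hc (by omega) hcm
  · obtain ⟨d, hd⟩ := Nat.exists_eq_add_of_le hmc
    have h := factorial_div_pow_le_mul hc m d
    rwa [← Nat.cast_add, ← hd, div_self (by positivity), one_pow, mul_one] at h

lemma factorial_div_pow_le_mul_exp {m k : ℕ} (hk : |(m : ℤ) - c| ≤ k) (hkc : k < c) :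
    (m ! : ℝ) / c ^ m ≤ c ! / c ^ c * exp (k ^ 2 / (c - k)) := by
  have hc : 0 < c := by omega
  have hck : (0 : ℝ) < c - k := sub_pos.2 (by exact_mod_cast hkc)
  have hexp : (k : ℝ) ^ 2 / (c - k) = k * (k / (c - k)) := by ring
  rw [abs_le] at hk
  rcases le_total c m with hcm | hmc
  · obtain ⟨d, rfl⟩ := Nat.exists_eq_add_of_le hcm
    refine (factorial_div_pow_le_mul hc c d).trans (mul_le_mul_of_nonneg_left ?_ (by positivity))
    rw [hexp]
    refine pow_le_exp_mul_of_le_one_add (by positivity) ?_ (by positivity) (by omega)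
    rw [add_div, div_self (by positivity), add_le_add_iff_left]
    have hdk : (d : ℝ) ≤ k := by exact_mod_cast (by omega : d ≤ k)
    gcongr
    linarith
  · obtain ⟨d, hd⟩ := Nat.exists_eq_add_of_le hmc
    have h := factorial_div_pow_mul_le hc m d
    rw [← hd, ← le_div_iff₀ (by positivity)] at h
    have hmk : (c : ℝ) - k ≤ m + 1 := by
      rw [sub_le_iff_le_add]; exact_mod_cast (by omega : c ≤ m + 1 + k)
    calc (m ! : ℝ) / c ^ m ≤ c ! / c ^ c / ((m + 1) / c) ^ d := h
      _ = c ! / c ^ c * (c / (m + 1)) ^ d := by rw [div_eq_mul_inv _ (_ ^ d), ← inv_pow, inv_div]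
      _ ≤ c ! / c ^ c * exp (k ^ 2 / (c - k)) := by
        refine mul_le_mul_of_nonneg_left ?_ (by positivity)
        rw [hexp]
        refine pow_le_exp_mul_of_le_one_add (by positivity) ?_ (by positivity) (by omega)
        rw [one_add_div hck.ne', sub_add_cancel]
        gcongr

lemma mul_exp_le_factorial_div_pow (hc : 0 < c) {δ m : ℕ} (hm : c + 2 * δ ≤ m) :
    (c ! : ℝ) / c ^ c * exp (δ * (δ - 1) / (c + δ)) ≤ m ! / c ^ m := by
  have hc' : (0 : ℝ) < c := by exact_mod_cast hc
  have hexp : exp (δ * (δ - 1) / (c + δ)) ≤ (((c + δ : ℕ) + 1) / c : ℝ) ^ δ :=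
    calc exp (δ * (δ - 1) / (c + δ)) ≤ exp (δ * (δ / (c + δ))) := by
          rw [mul_div_assoc]
          gcongr exp (_ * (?_ / _))
          linarith
      _ ≤ ((c + δ) / c) ^ δ := exp_nat_mul_div_add_le_pow hc' (Nat.cast_nonneg δ) δ
      _ ≤ (((c + δ : ℕ) + 1) / c : ℝ) ^ δ := by
          push_cast
          gcongr (?_ / _) ^ _
          linarith
  calc (c ! : ℝ) / c ^ c * exp (δ * (δ - 1) / (c + δ))
      ≤ (c + δ)! / c ^ (c + δ) * (((c + δ : ℕ) + 1) / c) ^ δ :=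
        mul_le_mul (factorial_div_pow_self_le hc _) hexp (exp_pos _).le (by positivity)
    _ ≤ (c + δ + δ)! / c ^ (c + δ + δ) := factorial_div_pow_mul_le hc _ _
    _ ≤ m ! / c ^ m := factorial_div_pow_le_of_le hc (by omega) (by omega)

end FactorialDivPow

theorem statement15_general (t : ℕ) (ht : 0 < t) (x y : Fin t → ℕ)
    (S : ℕ)
    (hxS : ∑ i, x i = S) (hyS : ∑ i, y i = S)
    (c : ℕ)
    (k : ℕ) (hk : ∀ i, |(x i : ℤ) - (c : ℤ)| ≤ (k : ℤ)) (hck : k < c)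
    (δ : ℕ) (hy1 : c + 2 * δ ≤ y ⟨0, ht⟩) :
    (∏ i, (Nat.factorial (x i) : ℝ) / (Nat.factorial (y i) : ℝ)) ≤
      Real.exp (-((δ : ℝ) * ((δ : ℝ) - 1)) / ((c : ℝ) + (δ : ℝ))
        + 2 * (k : ℝ) ^ 2 * (t : ℝ) / ((c : ℝ) - (k : ℝ))) := by
  have hc : 0 < c := by omega
  have hck' : (0 : ℝ) < c - k := sub_pos.2 (by exact_mod_cast hck)
  have hnum : ∏ i, ((x i)! : ℝ) / c ^ x i ≤ (c ! / c ^ c * exp (k ^ 2 / (c - k))) ^ t := by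
    simpa using prod_le_prod (s := univ) (fun i _ => by positivity)
      (fun i _ => factorial_div_pow_le_mul_exp (hk i) hck)
  have hden : ((c ! : ℝ) / c ^ c) ^ t * exp (δ * (δ - 1) / (c + δ)) ≤
      ∏ i, ((y i)! : ℝ) / c ^ y i := by
    simpa using pow_card_mul_le_prod ⟨0, ht⟩ (by positivity)
      (fun i => factorial_div_pow_self_le hc (y i)) (mul_exp_le_factorial_div_pow hc hy1)
  have hkt : t * (k ^ 2 / (c - k) : ℝ) ≤ 2 * k ^ 2 * t / (c - k) := by
    have : (t * k ^ 2 : ℝ) ≤ 2 * k ^ 2 * t := by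
      nlinarith [sq_nonneg (k : ℝ), t.cast_nonneg (α := ℝ)]
    rw [mul_div_assoc']
    exact div_le_div_of_nonneg_right this hck'.le
  rw [prod_div_eq_div_of_sum_eq univ _ _ (hxS.trans hyS.symm) (by positivity : (c : ℝ) ≠ 0)]
  calc _ ≤ (c ! / c ^ c * exp (k ^ 2 / (c - k))) ^ t /
        ((c ! / c ^ c : ℝ) ^ t * exp (δ * (δ - 1) / (c + δ))) :=
        div_le_div₀ (by positivity) hnum (by positivity) hden
    _ = exp (t * (k ^ 2 / (c - k)) - δ * (δ - 1) / (c + δ)) := by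
        rw [mul_pow, ← exp_nat_mul, exp_sub]
        field_simp
    _ ≤ _ := exp_le_exp.2 (by rw [neg_div]; linarith)

/-- Let `x 1 ≥ … ≥ x t ≥ 0` and `y 1 ≥ … ≥ y t ≥ 0` be non-negative integers with
`∑ x i = ∑ y i = S`.  Let `c = ⌊S/t⌋`, let `k ≥ 0` satisfy `|x i - c| ≤ k` for all `i`
and `c > k`, and let `δ ≥ 1` be an integer with `y 1 ≥ c + 2δ`.  Then
`∏ i, x i ! / y i ! ≤ exp (-δ(δ-1)/(c+δ) + 2k²t/(c-k))`. -/
theorem statement15 (t : ℕ) (ht : 0 < t) (x y : Fin t → ℕ)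
    (hx : Antitone x) (hy : Antitone y) (S : ℕ)
    (hxS : ∑ i, x i = S) (hyS : ∑ i, y i = S)
    (c : ℕ) (hc : c = S / t)
    (k : ℕ) (hk : ∀ i, |(x i : ℤ) - (c : ℤ)| ≤ (k : ℤ)) (hck : k < c)
    (δ : ℕ) (hδ : 1 ≤ δ) (hy1 : c + 2 * δ ≤ y ⟨0, ht⟩) :
    (∏ i, (Nat.factorial (x i) : ℝ) / (Nat.factorial (y i) : ℝ)) ≤
      Real.exp (-((δ : ℝ) * ((δ : ℝ) - 1)) / ((c : ℝ) + (δ : ℝ))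
        + 2 * (k : ℝ) ^ 2 * (t : ℝ) / ((c : ℝ) - (k : ℝ))) :=
  statement15_general t ht x y S hxS hyS c k hk hck δ hy1
end
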